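/- arXiv:1703.01244 — 3 statements merged into one kernel-verified Lean document; each statement's English description precedes it below -/
import Mathlib

section
/- Let f : ℝ³ → ℝ⁴ be defined by f(x) = ((1 − ‖x‖²)·e₀ + 2·ĵ(x))/(1 + ‖x‖²), where e₀ is the first standard basis vector of ℝ⁴ and ĵ : ℝ³ → ℝ⁴ is the isometric embedding onto the orthogonal complement of e₀ (the last three coordinates). Then f is differentiable at every x ∈ ℝ³, and for every x, v ∈ ℝ³ the Fréchet derivative satisfies ‖(fderiv f x) v‖² = 4‖v‖²/(1 + ‖x‖²)²; that is, the round metric on S³ pulls back under inverse stereographic projection to the conformal metric 4 dx²/(1 + ‖x‖²)². -/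
/-- The isometric embedding of ℝ³ onto the last three coordinates of ℝ⁴. -/
noncomputable def jEmb (x : EuclideanSpace ℝ (Fin 3)) : EuclideanSpace ℝ (Fin 4) :=
  (WithLp.equiv 2 (Fin 4 → ℝ)).symm (Fin.cons 0 (WithLp.equiv 2 (Fin 3 → ℝ) x))

/-!
Inverse stereographic projection is the inversion in the sphere of radius `√2` centred at the
south pole `-e₀`, restricted to the equatorial copy `ĵ(ℝ³)`: indeed `‖ĵ x + e₀‖² = 1 + ‖x‖²`.
The derivative of an inversion `inversion c R` at `p` is `(R / dist p c)²` times a reflection,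
so the derivative of `f` at `x` is `2 / (1 + ‖x‖²)` times a linear isometry.
-/

open EuclideanGeometry
open scoped RealInnerProductSpace

section Inversion

variable {E F : Type*} [NormedAddCommGroup E] [InnerProductSpace ℝ E]
  [NormedAddCommGroup F] [InnerProductSpace ℝ F] {e : F} (J : E →ₗᵢ[ℝ] F)

theorem dist_linearIsometry_neg_sq (he : ‖e‖ = 1) (horth : ∀ y, ⟪J y, e⟫ = 0) (x : E) :
    dist (J x) (-e) ^ 2 = 1 + ‖x‖ ^ 2 := by
  rw [dist_eq_norm, sub_neg_eq_add, sq, norm_add_sq_eq_norm_sq_add_norm_sq_real (horth x), he,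
    J.norm_map]
  ring

theorem inversion_neg_linearIsometry (he : ‖e‖ = 1) (horth : ∀ y, ⟪J y, e⟫ = 0) (x : E) :
    inversion (-e) √2 (J x) = (1 + ‖x‖ ^ 2)⁻¹ • ((1 - ‖x‖ ^ 2) • e + (2 : ℝ) • J x) := by
  have hs : (1 : ℝ) + ‖x‖ ^ 2 ≠ 0 := by positivity
  rw [inversion, div_pow, Real.sq_sqrt zero_le_two, dist_linearIsometry_neg_sq J he horth,
    vsub_eq_sub, vadd_eq_add, sub_neg_eq_add]
  have hcoeff : (1 + ‖x‖ ^ 2)⁻¹ * (1 - ‖x‖ ^ 2) = 2 / (1 + ‖x‖ ^ 2) - 1 := by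
    field_simp
    ring
  linear_combination (norm := module) -hcoeff • e

theorem hasFDerivAt_inversion_neg_linearIsometry (he : ‖e‖ = 1) (horth : ∀ y, ⟪J y, e⟫ = 0)
    (x : E) :
    HasFDerivAt (fun y ↦ inversion (-e) √2 (J y))
      ((2 / (1 + ‖x‖ ^ 2)) • ((ℝ ∙ (J x - -e))ᗮ.reflection : F →L[ℝ] F).comp
        J.toContinuousLinearMap) x := by
  have hd := dist_linearIsometry_neg_sq J he horth x
  have hne : J x ≠ -e := by
    rintro h
    rw [h, dist_self] at hd
    nlinarith [sq_nonneg ‖x‖]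
  have := (hasFDerivAt_inversion (R := √2) hne).comp x J.toContinuousLinearMap.hasFDerivAt
  rwa [div_pow, Real.sq_sqrt zero_le_two, hd, ContinuousLinearMap.smul_comp] at this

theorem norm_fderiv_inversion_neg_linearIsometry_apply (he : ‖e‖ = 1)
    (horth : ∀ y, ⟪J y, e⟫ = 0) (x v : E) :
    ‖fderiv ℝ (fun y ↦ inversion (-e) √2 (J y)) x v‖ = 2 / (1 + ‖x‖ ^ 2) * ‖v‖ := by
  rw [(hasFDerivAt_inversion_neg_linearIsometry J he horth x).fderiv]
  simp [norm_smul, abs_of_pos (by positivity : (0 : ℝ) < 1 + ‖x‖ ^ 2)]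

end Inversion

noncomputable def jEmbLinearIsometry :
    EuclideanSpace ℝ (Fin 3) →ₗᵢ[ℝ] EuclideanSpace ℝ (Fin 4) where
  toFun := jEmb
  map_add' x y := by ext i; cases i using Fin.cases <;> simp [jEmb]
  map_smul' c x := by ext i; cases i using Fin.cases <;> simp [jEmb]
  norm_map' x := by simp [EuclideanSpace.norm_eq, Fin.sum_univ_succ, jEmb]

theorem inner_jEmb_single_zero (x : EuclideanSpace ℝ (Fin 3)) :
    ⟪jEmb x, EuclideanSpace.single 0 1⟫ = 0 := by
  simp [EuclideanSpace.inner_single_right, jEmb]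

/-- Inverse stereographic projection `f x = ((1 − ‖x‖²) e₀ + 2 ĵ(x))/(1 + ‖x‖²)` from ℝ³
to the unit sphere S³ ⊂ ℝ⁴ is differentiable everywhere, and its Fréchet derivative
satisfies `‖(fderiv f x) v‖² = 4 ‖v‖²/(1 + ‖x‖²)²`: the round metric pulls back to the
conformal metric `4 dx²/(1 + ‖x‖²)²`. -/
theorem stereographic_conformal_metric_sphere
    (e₀ : EuclideanSpace ℝ (Fin 4)) (he₀ : e₀ = EuclideanSpace.single 0 1)
    (f : EuclideanSpace ℝ (Fin 3) → EuclideanSpace ℝ (Fin 4))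
    (hf : ∀ x, f x = (1 + ‖x‖ ^ 2)⁻¹ • ((1 - ‖x‖ ^ 2) • e₀ + (2 : ℝ) • jEmb x)) :
    ∀ x : EuclideanSpace ℝ (Fin 3), DifferentiableAt ℝ f x ∧
      ∀ v : EuclideanSpace ℝ (Fin 3),
        ‖fderiv ℝ f x v‖ ^ 2 = 4 * ‖v‖ ^ 2 / (1 + ‖x‖ ^ 2) ^ 2 := by
  subst he₀
  have he : ‖(EuclideanSpace.single 0 1 : EuclideanSpace ℝ (Fin 4))‖ = 1 := by simp
  obtain rfl : f = fun y ↦ inversion (-EuclideanSpace.single 0 1) √2 (jEmbLinearIsometry y) :=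
    funext fun y ↦ (hf y).trans
      (inversion_neg_linearIsometry jEmbLinearIsometry he inner_jEmb_single_zero y).symm
  intro x
  refine ⟨(hasFDerivAt_inversion_neg_linearIsometry _ he inner_jEmb_single_zero
    x).differentiableAt, fun v ↦ ?_⟩
  rw [norm_fderiv_inversion_neg_linearIsometry_apply _ he inner_jEmb_single_zero, mul_pow,
    div_pow]
  ring
end

section
/- In the Clifford algebra 𝔾₁,₃, let γ₀ denote the image under ι of the first standard basis vector of ℝ⁴, and let x ∈ ℝ⁴ have zeroth coordinate zero (so Q₁₃(x) = −‖x‖² for the Euclidean norm ‖x‖ of its spatial part). Then for m := x + (first standard basis vector), ι(m) * γ₀ * ι(m) = ι((1 + ‖x‖²)·(first standard basis vector) + 2·x) in 𝔾₁,₃. -/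
/-- In 𝔾₁,₃, for `x ∈ ℝ⁴` with zeroth coordinate zero (so `Q₁₃ x = −‖x‖²` for the
Euclidean norm of its spatial part) and `m = x + γ₀`, one has
`ι(m) γ₀ ι(m) = ι((1 + ‖x‖²) γ₀ + 2x)`. -/
theorem sandwich_formula_g13
    (Q13 : QuadraticForm ℝ (Fin 4 → ℝ))
    (hQ13 : ∀ x, Q13 x = x 0 ^ 2 - x 1 ^ 2 - x 2 ^ 2 - x 3 ^ 2)
    (x : Fin 4 → ℝ) (hx : x 0 = 0) :
    CliffordAlgebra.ι Q13 (x + Pi.single 0 1) * CliffordAlgebra.ι Q13 (Pi.single 0 1) *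
        CliffordAlgebra.ι Q13 (x + Pi.single 0 1) =
      CliffordAlgebra.ι Q13
        ((1 + ∑ i, x i ^ 2) • (Pi.single 0 1 : Fin 4 → ℝ) + (2 : ℝ) • x) := by
  set e : Fin 4 → ℝ := Pi.single 0 1 with he
  set s : ℝ := ∑ i, x i ^ 2 with hs
  set a := CliffordAlgebra.ι Q13 x with ha
  set b := CliffordAlgebra.ι Q13 e with hb
  have hQe : Q13 e = 1 := by
    rw [hQ13]; simp [he]
  have hQx : Q13 x = -s := by
    rw [hQ13, hs, Fin.sum_univ_four, hx]; ring
  have hpolar : QuadraticMap.polar Q13 x e = 0 := by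
    rw [QuadraticMap.polar, hQ13, hQ13, hQ13]
    simp [he, hx]
  have hbb : b * b = 1 := by
    rw [hb, CliffordAlgebra.ι_sq_scalar, hQe, map_one]
  have haa : a * a = algebraMap ℝ _ (-s) := by
    rw [ha, CliffordAlgebra.ι_sq_scalar, hQx]
  have hba : b * a = -(a * b) := by
    have := CliffordAlgebra.ι_mul_ι_add_swap (Q := Q13) x e
    rw [hpolar, map_zero] at this
    rw [ha, hb]
    exact eq_neg_of_add_eq_zero_right this
  have h2 : a * b * a = s • b := by
    calc a * b * a = -(b * a * a) := by rw [hba]; noncomm_ring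
    _ = -(b * (a * a)) := by rw [mul_assoc]
    _ = -(b * algebraMap ℝ _ (-s)) := by rw [haa]
    _ = s • b := by
        rw [← Algebra.commutes, Algebra.smul_def]
        simp
  have hL : (a + b) * b * (a + b) = a * b * a + a * (b * b) + (b * b) * a + (b * b) * b := by
    noncomm_ring
  rw [map_add, map_add, map_smul, map_smul, ← ha, ← hb, hL, hbb, h2]
  rw [mul_one, one_mul, one_mul, add_smul, one_smul]
  module
end

section
/- Let e₀ be the first standard basis vector of the Euclidean space ℝ⁴ and, for x ∈ ℝ⁴ orthogonal to e₀, let s(x) := ((1 − ‖x‖²)·e₀ + 2x)/(1 + ‖x‖²) be the inverse stereographic projection. For x_a, x_b ∈ ℝ⁴ orthogonal to e₀, set m_a := x_a + e₀ and m_b := x_b + e₀. Then (1/2)(1 + ⟨s(x_a), s(x_b)⟩) = 1 − ‖m_a − m_b‖²/(‖m_a‖²·‖m_b‖²); i.e., the transition probability between the spin states determined by x_a and x_b is expressed by the Euclidean distance between m_a and m_b. -/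
open scoped RealInnerProductSpace

/-- For `x_a, x_b ∈ ℝ⁴` orthogonal to `e₀`, with inverse stereographic projection
`s x = ((1 − ‖x‖²) e₀ + 2x)/(1 + ‖x‖²)` and `m_a = x_a + e₀`, `m_b = x_b + e₀`, the
transition probability satisfies
`(1/2)(1 + ⟪s x_a, s x_b⟫) = 1 − ‖m_a − m_b‖²/(‖m_a‖² ‖m_b‖²)`. -/
theorem transition_probability_euclidean_distance
    (e₀ : EuclideanSpace ℝ (Fin 4)) (he₀ : e₀ = EuclideanSpace.single 0 1)
    (s : EuclideanSpace ℝ (Fin 4) → EuclideanSpace ℝ (Fin 4))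
    (hs : ∀ x, s x = (1 + ‖x‖ ^ 2)⁻¹ • ((1 - ‖x‖ ^ 2) • e₀ + (2 : ℝ) • x))
    (xa xb : EuclideanSpace ℝ (Fin 4)) (hxa : ⟪xa, e₀⟫ = 0) (hxb : ⟪xb, e₀⟫ = 0) :
    (1 / 2) * (1 + ⟪s xa, s xb⟫) =
      1 - ‖(xa + e₀) - (xb + e₀)‖ ^ 2 / (‖xa + e₀‖ ^ 2 * ‖xb + e₀‖ ^ 2) := by
  have he : ‖e₀‖ ^ 2 = 1 := by
    rw [he₀, EuclideanSpace.norm_single]; norm_num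
  set a := ‖xa‖ ^ 2 with ha
  set b := ‖xb‖ ^ 2 with hb
  set t := ⟪xa, xb⟫ with ht
  have ha0 : 0 ≤ a := by positivity
  have hb0 : 0 ≤ b := by positivity
  have hxae : ⟪e₀, xa⟫ = 0 := by rw [real_inner_comm]; exact hxa
  have hxbe : ⟪e₀, xb⟫ = 0 := by rw [real_inner_comm]; exact hxb
  have hee : ⟪e₀, e₀⟫ = 1 := by rw [real_inner_self_eq_norm_sq, he]
  have hinner : ⟪s xa, s xb⟫ =
      (1 + a)⁻¹ * ((1 + b)⁻¹ * ((1 - a) * ((1 - b) * 1) + 2 * (2 * t))) := by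
    rw [hs, hs]
    simp only [inner_smul_left, inner_smul_right, inner_add_left, inner_add_right,
      hee, hxa, hxb, hxae, hxbe, map_inv₀, map_add, map_one,
      map_sub, map_mul, map_pow, conj_trivial, mul_zero, add_zero, zero_add, mul_one]
    ring
  have hna : ‖xa + e₀‖ ^ 2 = a + 1 := by
    rw [@norm_add_sq_real, hxa, he]; ring
  have hnb : ‖xb + e₀‖ ^ 2 = b + 1 := by
    rw [@norm_add_sq_real, hxb, he]; ring
  have hsub : (xa + e₀) - (xb + e₀) = xa - xb := by abel
  have hnd : ‖(xa + e₀) - (xb + e₀)‖ ^ 2 = a + b - 2 * t := by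
    rw [hsub, @norm_sub_sq_real, ← ht]; ring
  have h1a : (1 : ℝ) + a ≠ 0 := by positivity
  have h1b : (1 : ℝ) + b ≠ 0 := by positivity
  rw [hinner, hna, hnb, hnd]
  field_simp
  ring
end
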